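/- arXiv:0708.3839 — 2 statements merged into one kernel-verified Lean document; each statement's English description precedes it below -/
import Mathlib

section
/- Let Q be a connected quiver with #Q_1 = #Q_0 + 1, at least 6 vertices, all vertex degrees between 2 and 4, and at most one vertex of degree 4 or at most two of degree 3 (with all other vertices of degree 2). Then Q contains two adjacent vertices both of degree 2. -/
open Function CategoryTheory

/-- A finite quiver: finitely many vertices and arrows with source and target maps. -/
structure FinQuiver where
  nV : ℕ
  nA : ℕ
  src : Fin nA → Fin nV
  tgt : Fin nA → Fin nV

namespace FinQuiver

variable (Q : FinQuiver)

/-- Adjacency in the underlying undirected multigraph, using only arrows from `S`. -/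
def adjOn (S : Finset (Fin Q.nA)) (v w : Fin Q.nV) : Prop :=
  ∃ a ∈ S, (Q.src a = v ∧ Q.tgt a = w) ∨ (Q.src a = w ∧ Q.tgt a = v)

/-- Adjacency in the underlying undirected multigraph. -/
def adj (v w : Fin Q.nV) : Prop := Q.adjOn Finset.univ v w

/-- The subquiver with arrows `S` is connected (as an undirected multigraph). -/
def ConnectedOn (S : Finset (Fin Q.nA)) : Prop :=
  ∀ v w : Fin Q.nV, Relation.ReflTransGen (Q.adjOn S) v w

/-- The quiver is connected. -/
def Connected : Prop := 0 < Q.nV ∧ Q.ConnectedOn Finset.univ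

/-- The subquiver on the arrow set `S` is a (spanning) tree: it is connected and
has `#vertices - 1` arrows. -/
def IsSpanningTreeOn (S : Finset (Fin Q.nA)) : Prop :=
  Q.ConnectedOn S ∧ S.card + 1 = Q.nV

/-- The number of cycles of `Q`: the least number of arrows one has to remove from `Q`
in order to obtain a tree. -/
noncomputable def numCycles : ℕ :=
  sInf {n | ∃ R : Finset (Fin Q.nA), R.card = n ∧ Q.IsSpanningTreeOn Rᶜ}

/-- The degree of a vertex: number of arrows starting at `v` plus number of arrows ending
at `v`. -/
def deg (v : Fin Q.nV) : ℕ :=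
  (Finset.univ.filter fun a => Q.src a = v).card +
    (Finset.univ.filter fun a => Q.tgt a = v).card

/-- The two endpoints of a step of an undirected walk: an arrow together with the direction
in which it is traversed. -/
def stepEnds (p : Fin Q.nA × Bool) : Fin Q.nV × Fin Q.nV :=
  if p.2 then (Q.src p.1, Q.tgt p.1) else (Q.tgt p.1, Q.src p.1)

/-- An (undirected) trail: consecutive steps match and no arrow is used twice. -/
def IsTrail (w : List (Fin Q.nA × Bool)) : Prop :=
  (w.map Prod.fst).Nodup ∧ w.Chain' (fun p q => (Q.stepEnds p).2 = (Q.stepEnds q).1)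

/-- A trail from `v` to `v'`. -/
def TrailFromTo (w : List (Fin Q.nA × Bool)) (v v' : Fin Q.nV) : Prop :=
  Q.IsTrail w ∧ (∃ p, w.head? = some p ∧ (Q.stepEnds p).1 = v) ∧
    ∃ q, w.getLast? = some q ∧ (Q.stepEnds q).2 = v'

/-- The trail `w` visits the vertex `v`. -/
def Visits (w : List (Fin Q.nA × Bool)) (v : Fin Q.nV) : Prop :=
  ∃ p ∈ w, (Q.stepEnds p).1 = v ∨ (Q.stepEnds p).2 = v

/-- The vertex `v` lies on an (undirected) cycle of `Q`. -/
def OnCycle (v : Fin Q.nV) : Prop :=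
  ∃ w, w ≠ [] ∧ Q.TrailFromTo w v v

/-- The vertex `v` belongs to a cycle or to a trajectory joining two vertices belonging
to cycles. -/
def InCore (v : Fin Q.nV) : Prop :=
  Q.OnCycle v ∨
    ∃ v1 v2 w, Q.OnCycle v1 ∧ Q.OnCycle v2 ∧ Q.TrailFromTo w v1 v2 ∧ Q.Visits w v

/-- `Q` has a rooted tree of depth strictly greater than one: there are two adjacent
vertices outside the core. -/
def HasDeepRootedTree : Prop :=
  ∃ u1 u2 : Fin Q.nV, u1 ≠ u2 ∧ ¬ Q.InCore u1 ∧ ¬ Q.InCore u2 ∧ Q.adj u1 u2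

end FinQuiver

/-- A gentle algebra, presented combinatorially as a quiver with a set of length-two
monomial relations (`rel b a` means that the composition `b ∘ a` is a zero relation). -/
structure GentleAlg extends FinQuiver where
  rel : Fin nA → Fin nA → Prop
  rel_dec : DecidableRel rel
  rel_comp : ∀ b a, rel b a → src b = tgt a
  out_le_two : ∀ v, Nat.card {a : Fin nA // src a = v} ≤ 2
  in_le_two : ∀ v, Nat.card {a : Fin nA // tgt a = v} ≤ 2
  perm_pred_unique : ∀ b a a', src b = tgt a → ¬ rel b a → src b = tgt a' → ¬ rel b a' → a = a'
  perm_succ_unique : ∀ b c c', src c = tgt b → ¬ rel c b → src c' = tgt b → ¬ rel c' b → c = c'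
  rel_pred_unique : ∀ b a a', rel b a → rel b a' → a = a'
  rel_succ_unique : ∀ b c c', rel c b → rel c' b → c = c'
  no_perm_cycle : ∀ l : List (Fin nA), l ≠ [] →
    l.Chain' (fun a b => tgt a = src b ∧ ¬ rel b a) →
    ∀ h hl, l.head? = some h → l.getLast? = some hl → tgt hl = src h → rel h hl

namespace GentleAlg

variable (A : GentleAlg)

/-- A permitted path: consecutive arrows compose and no two consecutive arrows form a
zero relation. -/
def IsPermPath (l : List (Fin A.nA)) : Prop :=
  l.Chain' (fun a b => A.tgt a = A.src b ∧ ¬ A.rel b a)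

/-- A non-trivial permitted thread: a nonempty permitted path which is maximal. -/
def IsNontrivPermThread (l : List (Fin A.nA)) : Prop :=
  l ≠ [] ∧ A.IsPermPath l ∧ (∀ a, ¬ A.IsPermPath (a :: l)) ∧ ∀ a, ¬ A.IsPermPath (l ++ [a])

/-- The vertex `v` carries a trivial permitted thread. -/
def HasTrivPermThread (v : Fin A.nV) : Prop :=
  Nat.card {a : Fin A.nA // A.src a = v} ≤ 1 ∧ Nat.card {a : Fin A.nA // A.tgt a = v} ≤ 1 ∧
    ∀ b c, A.tgt b = v → A.src c = v → ¬ A.rel c b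

/-- The number of permitted threads (trivial and non-trivial) of `A`. -/
noncomputable def numPermThreads : ℕ :=
  Nat.card {l : List (Fin A.nA) // A.IsNontrivPermThread l} +
    Nat.card {v : Fin A.nV // A.HasTrivPermThread v}

/-- A forbidden path: pairwise distinct arrows, any two consecutive ones forming a zero
relation. -/
def IsForbPath (l : List (Fin A.nA)) : Prop :=
  l.Nodup ∧ l.Chain' (fun a b => A.rel b a)

/-- A non-trivial forbidden thread: a nonempty maximal forbidden path. -/
def IsNontrivForbThread (l : List (Fin A.nA)) : Prop :=
  l ≠ [] ∧ A.IsForbPath l ∧ (∀ a, ¬ A.IsForbPath (a :: l)) ∧ ∀ a, ¬ A.IsForbPath (l ++ [a])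

/-- The vertex `v` carries a trivial forbidden thread. -/
def HasTrivForbThread (v : Fin A.nV) : Prop :=
  Nat.card {a : Fin A.nA // A.src a = v} ≤ 1 ∧ Nat.card {a : Fin A.nA // A.tgt a = v} ≤ 1 ∧
    ∀ b c, A.tgt b = v → A.src c = v → A.rel c b

/-- The type of permitted threads of `A` (non-trivial ones and trivial ones). -/
abbrev PermThread : Type :=
  {l : List (Fin A.nA) // A.IsNontrivPermThread l} ⊕ {v : Fin A.nV // A.HasTrivPermThread v}

/-- The type of forbidden threads of `A` (non-trivial ones and trivial ones). -/
abbrev ForbThread : Type :=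
  {l : List (Fin A.nA) // A.IsNontrivForbThread l} ⊕ {v : Fin A.nV // A.HasTrivForbThread v}

/-- Start vertex of a permitted thread. -/
def pStart : A.PermThread → Fin A.nV
  | .inl l => A.src (l.1.head l.2.1)
  | .inr v => v.1

/-- End vertex of a permitted thread. -/
def pEnd : A.PermThread → Fin A.nV
  | .inl l => A.tgt (l.1.getLast l.2.1)
  | .inr v => v.1

/-- Start vertex of a forbidden thread. -/
def fStart : A.ForbThread → Fin A.nV
  | .inl l => A.src (l.1.head l.2.1)
  | .inr v => v.1

/-- End vertex of a forbidden thread. -/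
def fEnd : A.ForbThread → Fin A.nV
  | .inl l => A.tgt (l.1.getLast l.2.1)
  | .inr v => v.1

/-- The length (number of arrows) of a forbidden thread. -/
def forbLen : A.ForbThread → ℕ
  | .inl l => l.1.length
  | .inr _ => 0

/-- A full cycle of relations (contributing a pair `(0, m)` to the invariant). -/
def IsRelCycle (l : List (Fin A.nA)) : Prop :=
  l ≠ [] ∧ l.Nodup ∧ l.Chain' (fun a b => A.rel b a) ∧
    ∃ h hl, l.head? = some h ∧ l.getLast? = some hl ∧ A.rel h hl

end GentleAlg

/-- A choice of the sign functions `σ, ε : Q₁ → {1,-1}` of Butler–Ringel for a gentle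
algebra. -/
structure GentleAlg.Signs (G : GentleAlg) where
  sgn : Fin G.nA → Bool
  esgn : Fin G.nA → Bool
  sgn_src : ∀ a b, a ≠ b → G.src a = G.src b → sgn a ≠ sgn b
  esgn_tgt : ∀ a b, a ≠ b → G.tgt a = G.tgt b → esgn a ≠ esgn b
  sgn_comp : ∀ a b, G.src b = G.tgt a → ¬ G.rel b a → sgn b = ! esgn a

namespace GentleAlg.Signs

variable {G : GentleAlg} (S : G.Signs)

/-- The sign `σ` of the trivial permitted thread at a vertex. -/
noncomputable def pTrivSgn (v : Fin G.nV) : Bool :=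
  if h : ∃ c, G.src c = v then ! S.sgn h.choose
  else if h2 : ∃ b, G.tgt b = v then S.esgn h2.choose
  else false

/-- The sign `σ` of the trivial forbidden thread at a vertex. -/
noncomputable def fTrivSgn (v : Fin G.nV) : Bool :=
  if h : ∃ c, G.src c = v then ! S.sgn h.choose
  else if h2 : ∃ b, G.tgt b = v then ! S.esgn h2.choose
  else false

/-- The sign `σ` of a permitted thread. -/
noncomputable def pSgn : G.PermThread → Bool
  | .inl l => S.sgn (l.1.head l.2.1)
  | .inr v => S.pTrivSgn v.1

/-- The sign `ε` of a permitted thread. -/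
noncomputable def pEps : G.PermThread → Bool
  | .inl l => S.esgn (l.1.getLast l.2.1)
  | .inr v => ! S.pTrivSgn v.1

/-- The sign `σ` of a forbidden thread. -/
noncomputable def fSgn : G.ForbThread → Bool
  | .inl l => S.sgn (l.1.head l.2.1)
  | .inr v => S.fTrivSgn v.1

/-- The sign `ε` of a forbidden thread. -/
noncomputable def fEps : G.ForbThread → Bool
  | .inl l => S.esgn (l.1.getLast l.2.1)
  | .inr v => S.fTrivSgn v.1

end GentleAlg.Signs

/-- The pairing data of the Avella-Alaminos–Geiss algorithm: each permitted thread `H` is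
followed by the forbidden thread `forb H` ending where `H` ends (with opposite sign), and
the next permitted thread `next H` starts where `forb H` starts (with opposite sign). -/
structure GentleAlg.AGPairing (G : GentleAlg) (S : G.Signs) where
  next : G.PermThread → G.PermThread
  forb : G.PermThread → G.ForbThread
  next_bij : Function.Bijective next
  end_forb : ∀ H, G.fEnd (forb H) = G.pEnd H
  eps_forb : ∀ H, S.fEps (forb H) = ! S.pEps H
  start_next : ∀ H, G.pStart (next H) = G.fStart (forb H)
  sgn_next : ∀ H, S.pSgn (next H) = ! S.fSgn (forb H)

/-- The Avella-Alaminos–Geiss invariant `φ_A : ℕ × ℕ → ℕ` associated with a gentle algebra: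
`φ n m` is the number of orbits of the algorithm of size `n` whose forbidden threads use `m`
arrows in total (for `n = 0`, the number of full cycles of relations of length `m`). -/
noncomputable def GentleAlg.agPhi {G : GentleAlg} {S : G.Signs} (P : GentleAlg.AGPairing G S) :
    ℕ → ℕ → ℕ := fun n m =>
  if n = 0 then Nat.card {l : List (Fin G.nA) // G.IsRelCycle l ∧ l.length = m} / m
  else
    Nat.card {H : G.PermThread //
      Function.minimalPeriod P.next H = n ∧
        ∑ k ∈ Finset.range n, G.forbLen (P.forb (P.next^[k] H)) = m} / n

/-- `x` is a transition vertex with incoming arrow `α` and outgoing arrow `β`. -/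
def GentleAlg.TransitionAt (A : GentleAlg) (x : Fin A.nV) (α β : Fin A.nA) : Prop :=
  α ≠ β ∧ A.tgt α = x ∧ A.src β = x ∧ (∀ a, A.tgt a = x → a = α) ∧
    (∀ a, A.src a = x → a = β) ∧ ¬ A.rel β α

/-- `B` is the contraction `A ∖ {x}` of `A` at the transition vertex `x`, replacing the
arrows `α`, `β` by a single arrow (indexed by `none`). -/
def GentleAlg.IsContraction (A : GentleAlg) (x : Fin A.nV) (α β : Fin A.nA)
    (B : GentleAlg) : Prop :=
  ∃ (ev : {v : Fin A.nV // v ≠ x} ≃ Fin B.nV)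
    (ea : Option {a : Fin A.nA // a ≠ α ∧ a ≠ β} ≃ Fin B.nA),
    (∀ (a : {a : Fin A.nA // a ≠ α ∧ a ≠ β}) (h : A.src a.1 ≠ x),
        B.src (ea (some a)) = ev ⟨A.src a.1, h⟩) ∧
    (∀ (a : {a : Fin A.nA // a ≠ α ∧ a ≠ β}) (h : A.tgt a.1 ≠ x),
        B.tgt (ea (some a)) = ev ⟨A.tgt a.1, h⟩) ∧
    (∀ h : A.src α ≠ x, B.src (ea none) = ev ⟨A.src α, h⟩) ∧
    (∀ h : A.tgt β ≠ x, B.tgt (ea none) = ev ⟨A.tgt β, h⟩) ∧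
    (∀ b a, B.rel (ea (some b)) (ea (some a)) ↔ A.rel b.1 a.1) ∧
    (∀ b, B.rel (ea (some b)) (ea none) ↔ A.rel b.1 β) ∧
    (∀ a, B.rel (ea none) (ea (some a)) ↔ A.rel α a.1) ∧
    (B.rel (ea none) (ea none) ↔ A.rel α β)

/-- `x` is a degree-one vertex which is the start point of the arrow `θ`, where `θ` is
involved in a relation (case (2) of the removable-vertex definition). -/
def GentleAlg.DeletionAt (A : GentleAlg) (x : Fin A.nV) (θ : Fin A.nA) : Prop :=
  A.src θ = x ∧ (∀ a, A.src a = x → a = θ) ∧ (∀ a, A.tgt a ≠ x) ∧ ∃ κ, A.rel κ θ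

/-- `B` is obtained from `A` by deleting the degree-one vertex `x` and the arrow `θ`. -/
def GentleAlg.IsDeletion (A : GentleAlg) (x : Fin A.nV) (θ : Fin A.nA) (B : GentleAlg) : Prop :=
  ∃ (ev : {v : Fin A.nV // v ≠ x} ≃ Fin B.nV) (ea : {a : Fin A.nA // a ≠ θ} ≃ Fin B.nA),
    (∀ (a : {a : Fin A.nA // a ≠ θ}) (h : A.src a.1 ≠ x),
        B.src (ea a) = ev ⟨A.src a.1, h⟩) ∧
    (∀ (a : {a : Fin A.nA // a ≠ θ}) (h : A.tgt a.1 ≠ x),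
        B.tgt (ea a) = ev ⟨A.tgt a.1, h⟩) ∧
    ∀ b a, B.rel (ea b) (ea a) ↔ A.rel b.1 a.1

/-- `B` is obtained from `A` by removing a vertex `x` as in the contraction construction
(Definition of `A ∖ {x}`). -/
def GentleAlg.RemovableTo (A : GentleAlg) (x : Fin A.nV) (B : GentleAlg) : Prop :=
  (∃ α β, GentleAlg.TransitionAt A x α β ∧ GentleAlg.IsContraction A x α β B) ∨
    ∃ θ, GentleAlg.DeletionAt A x θ ∧ GentleAlg.IsDeletion A x θ B

/-- The configuration for the vertex transformation `V_i` (generic case). -/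
structure GentleAlg.VertexConfig (A : GentleAlg) where
  i : Fin A.nV
  j1 : Fin A.nV
  j2 : Fin A.nV
  s1 : Fin A.nV
  s2 : Fin A.nV
  p1 : Fin A.nV
  p2 : Fin A.nV
  α1 : Fin A.nA
  α2 : Fin A.nA
  σ1 : Fin A.nA
  σ2 : Fin A.nA
  π1 : Fin A.nA
  π2 : Fin A.nA
  hα1s : A.src α1 = i
  hα1t : A.tgt α1 = j1
  hα2s : A.src α2 = i
  hα2t : A.tgt α2 = j2
  hαne : α1 ≠ α2
  hj1 : j1 ≠ i
  hj2 : j2 ≠ i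
  hs1 : s1 ≠ i
  hs2 : s2 ≠ i
  hσ1s : A.src σ1 = j1
  hσ1t : A.tgt σ1 = s1
  hσ2s : A.src σ2 = j2
  hσ2t : A.tgt σ2 = s2
  hrσ1 : A.rel σ1 α1
  hrσ2 : A.rel σ2 α2
  hπ1s : A.src π1 = p1
  hπ1t : A.tgt π1 = i
  hπ2s : A.src π2 = p2
  hπ2t : A.tgt π2 = i
  hrπ1 : A.rel α1 π1
  hrπ2 : A.rel α2 π2

namespace GentleAlg.VertexConfig

variable {A : GentleAlg} (d : A.VertexConfig)

/-- Sources of the arrows after the vertex transformation. -/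
def newSrc : Fin A.nA → Fin A.nV := fun a =>
  if a = d.α1 then d.j1
  else if a = d.α2 then d.j2
  else if a = d.σ1 ∨ a = d.σ2 then d.i
  else if a = d.π1 then d.p2
  else if a = d.π2 then d.p1
  else A.src a

/-- Targets of the arrows after the vertex transformation. -/
def newTgt : Fin A.nA → Fin A.nV := fun a =>
  if a = d.α1 ∨ a = d.α2 then d.i
  else if a = d.π1 then d.j1
  else if a = d.π2 then d.j2
  else A.tgt a

/-- Relations after the vertex transformation. -/
def newRel : Fin A.nA → Fin A.nA → Prop := fun b a =>
  ((b = d.σ1 ∧ a = d.α2) ∨ (b = d.σ2 ∧ a = d.α1) ∨ (b = d.α1 ∧ a = d.π1) ∨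
      (b = d.α2 ∧ a = d.π2)) ∨
    (A.rel b a ∧
      ¬((b = d.σ1 ∧ a = d.α1) ∨ (b = d.σ2 ∧ a = d.α2) ∨ (b = d.α1 ∧ a = d.π1) ∨
        (b = d.α2 ∧ a = d.π2)))

end GentleAlg.VertexConfig

/-- `B` is the result of the vertex transformation `V_i` of `A` given by the
configuration `d`. -/
def GentleAlg.IsVertexTransform (A : GentleAlg) (d : A.VertexConfig) (B : GentleAlg) : Prop :=
  ∃ (hV : B.nV = A.nV) (hA : B.nA = A.nA),
    (∀ a : Fin A.nA, B.src (Fin.cast hA.symm a) = Fin.cast hV.symm (d.newSrc a)) ∧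
    (∀ a : Fin A.nA, B.tgt (Fin.cast hA.symm a) = Fin.cast hV.symm (d.newTgt a)) ∧
    ∀ b a : Fin A.nA, B.rel (Fin.cast hA.symm b) (Fin.cast hA.symm a) ↔ d.newRel b a

/-- The configuration for the arrow transformation `F_δ`. -/
structure GentleAlg.ArrowConfig (A : GentleAlg) where
  i : Fin A.nV
  j : Fin A.nV
  b : Fin A.nV
  c : Fin A.nV
  l : Fin A.nV
  x : Fin A.nV
  δ : Fin A.nA
  β : Fin A.nA
  γ : Fin A.nA
  lam : Fin A.nA
  ξ : Fin A.nA
  hij : i ≠ j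
  hδs : A.src δ = i
  hδt : A.tgt δ = j
  hβs : A.src β = b
  hβt : A.tgt β = i
  hγs : A.src γ = i
  hγt : A.tgt γ = c
  hlams : A.src lam = l
  hlamt : A.tgt lam = i
  hξs : A.src ξ = j
  hξt : A.tgt ξ = x
  hγδ : γ ≠ δ
  hβlam : β ≠ lam
  hrβ : A.rel δ β
  hrlam : A.rel γ lam
  hrξ : A.rel ξ δ
  /-- the separation condition `Q₀¹ ∩ Q₀² = ∅`: after removing `β` and `γ`, the vertices
  `b` and `c` are not connected to `i`. -/
  hsep1 : ¬ Relation.ReflTransGen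
    (A.toFinQuiver.adjOn ((Finset.univ.erase β).erase γ)) b i
  hsep2 : ¬ Relation.ReflTransGen
    (A.toFinQuiver.adjOn ((Finset.univ.erase β).erase γ)) c i

namespace GentleAlg.ArrowConfig

variable {A : GentleAlg} (d : A.ArrowConfig)

/-- Sources of the arrows after the arrow transformation. -/
def newSrc : Fin A.nA → Fin A.nV := fun a =>
  if a = d.δ then d.j else if a = d.ξ then d.i else A.src a

/-- Targets of the arrows after the arrow transformation. -/
def newTgt : Fin A.nA → Fin A.nV := fun a =>
  if a = d.δ then d.i else if a = d.lam then d.j else A.tgt a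

/-- Relations after the arrow transformation. -/
def newRel : Fin A.nA → Fin A.nA → Prop := fun b' a =>
  ((b' = d.γ ∧ a = d.δ) ∨ (b' = d.ξ ∧ a = d.β) ∨ (b' = d.δ ∧ a = d.lam)) ∨
    (A.rel b' a ∧
      ¬((b' = d.δ ∧ a = d.β) ∨ (b' = d.γ ∧ a = d.lam) ∨ (b' = d.ξ ∧ a = d.δ)))

end GentleAlg.ArrowConfig

/-- `B` is the result of the arrow transformation `F_δ` of `A` given by the
configuration `d`. -/
def GentleAlg.IsArrowTransform (A : GentleAlg) (d : A.ArrowConfig) (B : GentleAlg) : Prop :=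
  ∃ (hV : B.nV = A.nV) (hA : B.nA = A.nA),
    (∀ a : Fin A.nA, B.src (Fin.cast hA.symm a) = Fin.cast hV.symm (d.newSrc a)) ∧
    (∀ a : Fin A.nA, B.tgt (Fin.cast hA.symm a) = Fin.cast hV.symm (d.newTgt a)) ∧
    ∀ b a : Fin A.nA, B.rel (Fin.cast hA.symm b) (Fin.cast hA.symm a) ↔ d.newRel b a

/-- The configuration for the loop transformation `L_λ`. -/
structure GentleAlg.LoopConfig (A : GentleAlg) where
  i : Fin A.nV
  j : Fin A.nV
  l : Fin A.nV
  x : Fin A.nV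
  lam : Fin A.nA
  α : Fin A.nA
  δ : Fin A.nA
  ξ : Fin A.nA
  hij : i ≠ j
  hlams : A.src lam = i
  hlamt : A.tgt lam = i
  hαs : A.src α = l
  hαt : A.tgt α = i
  hδs : A.src δ = i
  hδt : A.tgt δ = j
  hξs : A.src ξ = j
  hξt : A.tgt ξ = x
  hαlam : α ≠ lam
  hδlam : δ ≠ lam
  hrα : A.rel δ α
  hrξ : A.rel ξ δ

namespace GentleAlg.LoopConfig

variable {A : GentleAlg} (d : A.LoopConfig)

/-- Sources of the arrows after the loop transformation. -/
def newSrc : Fin A.nA → Fin A.nV := fun a =>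
  if a = d.δ then d.j else if a = d.ξ then d.i else A.src a

/-- Targets of the arrows after the loop transformation. -/
def newTgt : Fin A.nA → Fin A.nV := fun a =>
  if a = d.α then d.j else if a = d.δ then d.i else A.tgt a

end GentleAlg.LoopConfig

/-- `B` is the result of the loop transformation `L_λ` of `A` given by the
configuration `d`. -/
def GentleAlg.IsLoopTransform (A : GentleAlg) (d : A.LoopConfig) (B : GentleAlg) : Prop :=
  ∃ (hV : B.nV = A.nV) (hA : B.nA = A.nA),
    (∀ a : Fin A.nA, B.src (Fin.cast hA.symm a) = Fin.cast hV.symm (d.newSrc a)) ∧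
    (∀ a : Fin A.nA, B.tgt (Fin.cast hA.symm a) = Fin.cast hV.symm (d.newTgt a)) ∧
    ∀ b a : Fin A.nA, B.rel (Fin.cast hA.symm b) (Fin.cast hA.symm a) ↔ A.rel b a

/-- `B` is obtained from `A` by a single elementary transformation (over a vertex, an
arrow or a loop). -/
def GentleAlg.ElemMove (A B : GentleAlg) : Prop :=
  (∃ d : A.VertexConfig, GentleAlg.IsVertexTransform A d B) ∨
    (∃ d : A.ArrowConfig, GentleAlg.IsArrowTransform A d B) ∨
    ∃ d : A.LoopConfig, GentleAlg.IsLoopTransform A d B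

/-- `A` and `B` are derived equivalent under elementary transformations: `B` is obtained
from `A` by a finite sequence of elementary transformations and their inverses. -/
def GentleAlg.ElemEquiv (A B : GentleAlg) : Prop :=
  Relation.ReflTransGen (fun X Y => GentleAlg.ElemMove X Y ∨ GentleAlg.ElemMove Y X) A B

/-- The defining relations of the algebra `kQ/⟨P⟩` inside the free algebra on the
idempotents (vertices) and the arrows. -/
inductive GentleAlg.PathRel (G : GentleAlg) :
    FreeAlgebra ℚ (Fin G.nV ⊕ Fin G.nA) → FreeAlgebra ℚ (Fin G.nV ⊕ Fin G.nA) → Prop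
  | idem (v : Fin G.nV) :
      GentleAlg.PathRel G (FreeAlgebra.ι ℚ (Sum.inl v) * FreeAlgebra.ι ℚ (Sum.inl v))
        (FreeAlgebra.ι ℚ (Sum.inl v))
  | orth (v w : Fin G.nV) : v ≠ w →
      GentleAlg.PathRel G (FreeAlgebra.ι ℚ (Sum.inl v) * FreeAlgebra.ι ℚ (Sum.inl w)) 0
  | unit :
      GentleAlg.PathRel G (∑ v : Fin G.nV, FreeAlgebra.ι ℚ (Sum.inl v)) 1
  | left_id (a : Fin G.nA) :
      GentleAlg.PathRel G (FreeAlgebra.ι ℚ (Sum.inl (G.tgt a)) * FreeAlgebra.ι ℚ (Sum.inr a))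
        (FreeAlgebra.ι ℚ (Sum.inr a))
  | right_id (a : Fin G.nA) :
      GentleAlg.PathRel G (FreeAlgebra.ι ℚ (Sum.inr a) * FreeAlgebra.ι ℚ (Sum.inl (G.src a)))
        (FreeAlgebra.ι ℚ (Sum.inr a))
  | left_ann (v : Fin G.nV) (a : Fin G.nA) : v ≠ G.tgt a →
      GentleAlg.PathRel G (FreeAlgebra.ι ℚ (Sum.inl v) * FreeAlgebra.ι ℚ (Sum.inr a)) 0
  | right_ann (v : Fin G.nV) (a : Fin G.nA) : v ≠ G.src a →
      GentleAlg.PathRel G (FreeAlgebra.ι ℚ (Sum.inr a) * FreeAlgebra.ι ℚ (Sum.inl v)) 0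
  | zero_rel (b a : Fin G.nA) : G.rel b a →
      GentleAlg.PathRel G (FreeAlgebra.ι ℚ (Sum.inr b) * FreeAlgebra.ι ℚ (Sum.inr a)) 0

/-- The gentle algebra `kQ/⟨P⟩` as an actual ring (over `k = ℚ`). -/
def GentleAlg.kAlg (G : GentleAlg) : Type := RingQuot (GentleAlg.PathRel G)

noncomputable instance (G : GentleAlg) : Ring (GentleAlg.kAlg G) :=
  inferInstanceAs (Ring (RingQuot (GentleAlg.PathRel G)))

/-- Two rings are derived equivalent if their derived categories of modules are
equivalent. -/
def DerivedEquiv (R S : Type) [Ring R] [Ring S] : Prop :=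
  letI : HasDerivedCategory (ModuleCat.{0} R) := HasDerivedCategory.standard _
  letI : HasDerivedCategory (ModuleCat.{0} S) := HasDerivedCategory.standard _
  Nonempty (DerivedCategory (ModuleCat.{0} R) ≌ DerivedCategory (ModuleCat.{0} S))

/-- `A` is (isomorphic to) the gentle algebra with `n` vertices, `m` arrows, sources `s`,
targets `t` and relations `r`. -/
def GentleAlg.MatchesData (A : GentleAlg) (n m : ℕ) (s t : Fin m → Fin n)
    (r : Fin m → Fin m → Prop) : Prop :=
  ∃ (hV : A.nV = n) (hA : A.nA = m),
    (∀ a : Fin m, A.src (Fin.cast hA.symm a) = Fin.cast hV.symm (s a)) ∧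
    (∀ a : Fin m, A.tgt (Fin.cast hA.symm a) = Fin.cast hV.symm (t a)) ∧
    ∀ b a : Fin m, A.rel (Fin.cast hA.symm b) (Fin.cast hA.symm a) ↔ r b a

/-- The number of nonzero paths from `y` to `x` in the gentle algebra `A` (including the
trivial path when `x = y`). -/
noncomputable def GentleAlg.numPaths (A : GentleAlg) (x y : Fin A.nV) : ℕ :=
  Nat.card {l : List (Fin A.nA) // A.IsPermPath l ∧
    ((l = [] ∧ x = y) ∨
      ∃ h hl, l.head? = some h ∧ l.getLast? = some hl ∧ A.src h = y ∧ A.tgt hl = x)}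

/-- Isomorphism of gentle algebras (as quivers with relations). -/
def GentleAlg.Iso (A B : GentleAlg) : Prop :=
  ∃ (ev : Fin A.nV ≃ Fin B.nV) (ea : Fin A.nA ≃ Fin B.nA),
    (∀ a, B.src (ea a) = ev (A.src a)) ∧ (∀ a, B.tgt (ea a) = ev (A.tgt a)) ∧
      ∀ b a, B.rel (ea b) (ea a) ↔ A.rel b a

/-- A perfect matching of `[2n]`, encoded as a fixed-point-free involution. -/
def PerfectMatching (n : ℕ) : Type :=
  {f : Equiv.Perm (Fin (2 * n)) // ∀ i, f i ≠ i ∧ f (f i) = i}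

/-! If no two vertices of degree `2` were adjacent, every arrow would have an endpoint of
degree `≠ 2`: a loop at a vertex of degree `2` is excluded, since that loop would be the
only arrow at the vertex and so cut it off from the rest of the connected quiver. Hence
`#Q₁` is at most the sum of the degrees `≠ 2`, which is `4` or `6`, whereas
`#Q₁ = #Q₀ + 1 ≥ 7`. -/

open Finset

namespace FinQuiver

variable (Q : FinQuiver)

theorem sum_deg (S : Finset (Fin Q.nV)) :
    ∑ v ∈ S, Q.deg v = #{a | Q.src a ∈ S} + #{a | Q.tgt a ∈ S} := by
  simp only [deg, sum_add_distrib, sum_card_fiberwise_eq_card_filter]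

theorem nA_le_sum_deg {S : Finset (Fin Q.nV)} (hS : ∀ a, Q.src a ∈ S ∨ Q.tgt a ∈ S) :
    Q.nA ≤ ∑ v ∈ S, Q.deg v := by
  calc Q.nA = #(univ.filter fun a => Q.src a ∈ S ∨ Q.tgt a ∈ S) := by
        rw [filter_true_of_mem fun a _ => hS a, card_univ, Fintype.card_fin]
    _ ≤ ∑ v ∈ S, Q.deg v := by rw [sum_deg, filter_or]; exact card_union_le _ _

variable {Q}

theorem eq_of_loop_of_deg_eq_two {u : Fin Q.nV} (hu : Q.deg u = 2) {a : Fin Q.nA}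
    (hs : Q.src a = u) (ht : Q.tgt a = u) {b : Fin Q.nA} (hb : Q.src b = u ∨ Q.tgt b = u) :
    b = a := by
  have hsrc : 0 < #{c | Q.src c = u} := card_pos.mpr ⟨a, by simp [hs]⟩
  have htgt : 0 < #{c | Q.tgt c = u} := card_pos.mpr ⟨a, by simp [ht]⟩
  have hsrc1 : #{c | Q.src c = u} ≤ 1 := by rw [deg] at hu; omega
  have htgt1 : #{c | Q.tgt c = u} ≤ 1 := by rw [deg] at hu; omega
  rcases hb with hb | hb
  · exact card_le_one.mp hsrc1 b (by simp [hb]) a (by simp [hs])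
  · exact card_le_one.mp htgt1 b (by simp [hb]) a (by simp [ht])

theorem eq_of_reflTransGen_of_only_loops {S : Finset (Fin Q.nA)} {u x : Fin Q.nV}
    (hu : ∀ b, Q.src b = u ∨ Q.tgt b = u → Q.src b = u ∧ Q.tgt b = u)
    (hux : Relation.ReflTransGen (Q.adjOn S) u x) : x = u := by
  induction hux with
  | refl => rfl
  | tail _ hyz ih =>
    subst ih
    obtain ⟨b, -, ⟨hs, ht⟩ | ⟨hs, ht⟩⟩ := hyz
    · exact ht ▸ (hu b (.inl hs)).2
    · exact hs ▸ (hu b (.inr ht)).1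

theorem Connected.not_loop_of_deg_eq_two (hQ : Q.Connected) (h2 : 2 ≤ Q.nV) {u : Fin Q.nV}
    (hu : Q.deg u = 2) (a : Fin Q.nA) : ¬(Q.src a = u ∧ Q.tgt a = u) := by
  rintro ⟨hs, ht⟩
  have : Nontrivial (Fin Q.nV) := Fin.nontrivial_iff_two_le.mpr h2
  obtain ⟨x, hx⟩ := exists_ne u
  refine hx (eq_of_reflTransGen_of_only_loops (fun b hb => ?_) (hQ.2 u x))
  rw [eq_of_loop_of_deg_eq_two hu hs ht hb]
  exact ⟨hs, ht⟩

theorem Connected.exists_adj_deg_two_of_sum_deg_lt (hQ : Q.Connected) (h2 : 2 ≤ Q.nV)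
    (S : Finset (Fin Q.nV)) (hS : ∀ v ∉ S, Q.deg v = 2) (hlt : ∑ v ∈ S, Q.deg v < Q.nA) :
    ∃ v w, v ≠ w ∧ Q.deg v = 2 ∧ Q.deg w = 2 ∧ Q.adj v w := by
  by_contra! hnadj
  refine hlt.not_ge (Q.nA_le_sum_deg fun a => ?_)
  by_contra! ha
  by_cases hloop : Q.src a = Q.tgt a
  · exact hQ.not_loop_of_deg_eq_two h2 (hS _ ha.1) a ⟨rfl, hloop.symm⟩
  · exact hnadj _ _ hloop (hS _ ha.1) (hS _ ha.2) ⟨a, mem_univ a, .inl ⟨rfl, rfl⟩⟩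

end FinQuiver

theorem adjacent_degree_two_general (Q : FinQuiver) (hconn : Q.Connected) (hA : Q.nA = Q.nV + 1)
    (h6 : 6 ≤ Q.nV)
    (hex : (∃ v, Q.deg v = 4 ∧ ∀ w, w ≠ v → Q.deg w = 2) ∨
      ∃ v w, v ≠ w ∧ Q.deg v = 3 ∧ Q.deg w = 3 ∧ ∀ u, u ≠ v → u ≠ w → Q.deg u = 2) :
    ∃ v w, v ≠ w ∧ Q.deg v = 2 ∧ Q.deg w = 2 ∧ Q.adj v w := by
  have h2 : 2 ≤ Q.nV := by omega
  rcases hex with ⟨v, hv, hrest⟩ | ⟨v, w, hvw, hv, hw, hrest⟩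
  · refine hconn.exists_adj_deg_two_of_sum_deg_lt h2 {v} (fun u hu => hrest u ?_) ?_
    · simpa using hu
    · rw [sum_singleton, hv]; omega
  · refine hconn.exists_adj_deg_two_of_sum_deg_lt h2 {v, w}
      (fun u hu => hrest u (by simp_all) (by simp_all)) ?_
    rw [sum_pair hvw, hv, hw]; omega

/-- a connected quiver with `#Q₁ = #Q₀ + 1`, at least six vertices, all
degrees in `[2,4]`, and either one vertex of degree `4` or two of degree `3` (all others
of degree `2`), contains two adjacent vertices of degree `2`. -/
theorem adjacent_degree_two (Q : FinQuiver) (hconn : Q.Connected) (hA : Q.nA = Q.nV + 1)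
    (h6 : 6 ≤ Q.nV) (hdeg : ∀ v, 2 ≤ Q.deg v ∧ Q.deg v ≤ 4)
    (hex : (∃ v, Q.deg v = 4 ∧ ∀ w, w ≠ v → Q.deg w = 2) ∨
      ∃ v w, v ≠ w ∧ Q.deg v = 3 ∧ Q.deg w = 3 ∧ ∀ u, u ≠ v → u ≠ w → Q.deg u = 2) :
    ∃ v w, v ≠ w ∧ Q.deg v = 2 ∧ Q.deg w = 2 ∧ Q.adj v w :=
  adjacent_degree_two_general Q hconn hA h6 hex
end

section
/- Let A = kQ/⟨P⟩ be a gentle algebra where Q has two cycles and x ∈ Q_0 is a transition vertex (exactly one incoming arrow α, one outgoing arrow β, with βα ∉ P). Then the algebra A∖{x}, obtained by deleting x and replacing α, β by a single arrow α' from s(α) to e(β) with relations inherited accordingly, is again a gentle algebra whose quiver is connected with two cycles and has exactly one vertex and one arrow fewer than Q. -/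
open Function CategoryTheory

/-!
Every arrow of `A ∖ {x}` stands for a permitted path of `A` (the new arrow for `βα`, permitted
since `βα ∉ P`), whose first arrow carries its relations on the left and whose last arrow those on
the right. Both the first-arrow and the last-arrow maps are injective, so each gentle axiom of
`A ∖ {x}` is an instance of the same axiom of `A`, and a permitted cycle of `A ∖ {x}` expands to
one of `A`. Contracting whichever of `α`, `β` lies in a spanning tree of `Q` turns it into a
spanning tree of `Q'`, so `Q'` is connected and `c(Q') = #Q₁' - #Q₀' + 1 = c(Q)`.
-/

theorem Fintype.card_subtype_ne_add_one {V : Type*} [Fintype V] [DecidableEq V] (x : V) :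
    Fintype.card {v // v ≠ x} + 1 = Fintype.card V := by
  rw [Fintype.card_subtype, Finset.filter_ne', Finset.card_erase_add_one (Finset.mem_univ x),
    Finset.card_univ]

namespace FinQuiver

variable {Q : FinQuiver}

theorem adjOn_comm {S : Finset (Fin Q.nA)} {v w : Fin Q.nV} : Q.adjOn S v w ↔ Q.adjOn S w v :=
  ⟨fun ⟨a, ha, h⟩ => ⟨a, ha, h.symm⟩, fun ⟨a, ha, h⟩ => ⟨a, ha, h.symm⟩⟩

theorem ConnectedOn.mono {S T : Finset (Fin Q.nA)} (h : Q.ConnectedOn S) (hST : S ⊆ T) :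
    Q.ConnectedOn T :=
  fun v w => Relation.ReflTransGen.mono (fun _ _ ⟨a, ha, hends⟩ => ⟨a, hST ha, hends⟩) _ _ (h v w)

theorem ConnectedOn.map {Q' : FinQuiver} {S : Finset (Fin Q.nA)} {S' : Finset (Fin Q'.nA)}
    (h : Q.ConnectedOn S) (f : Fin Q.nV → Fin Q'.nV) (hf : Function.Surjective f)
    (hS : ∀ a ∈ S, Relation.ReflTransGen (Q'.adjOn S') (f (Q.src a)) (f (Q.tgt a))) :
    Q'.ConnectedOn S' := by
  have : Std.Symm (Q'.adjOn S') := ⟨fun _ _ => adjOn_comm.1⟩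
  have step : Q.adjOn S ≤ (Relation.ReflTransGen (Q'.adjOn S') on f) := by
    rintro v w ⟨a, ha, ⟨rfl, rfl⟩ | ⟨rfl, rfl⟩⟩
    · exact hS a ha
    · exact symm (hS a ha)
  intro v' w'
  obtain ⟨v, rfl⟩ := hf v'
  obtain ⟨w, rfl⟩ := hf w'
  exact Relation.ReflTransGen.lift' f step _ _ (h v w)

theorem IsSpanningTreeOn.connected {S : Finset (Fin Q.nA)} (h : Q.IsSpanningTreeOn S) :
    Q.Connected :=
  ⟨by have := h.2; omega, h.1.mono (Finset.subset_univ S)⟩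

theorem IsSpanningTreeOn.numCycles_add_nV {S : Finset (Fin Q.nA)} (h : Q.IsSpanningTreeOn S) :
    Q.numCycles + Q.nV = Q.nA + 1 := by
  have hcard : ∀ n ∈ {n | ∃ R : Finset (Fin Q.nA), R.card = n ∧ Q.IsSpanningTreeOn Rᶜ},
      n + Q.nV = Q.nA + 1 := by
    rintro n ⟨R, rfl, -, hR⟩
    have := R.card_add_card_compl
    simp only [Fintype.card_fin] at this
    omega
  exact hcard _ (Nat.sInf_mem ⟨_, Sᶜ, rfl, by rwa [compl_compl]⟩)

theorem exists_isSpanningTreeOn_of_numCycles_ne_zero (h : Q.numCycles ≠ 0) :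
    ∃ S, Q.IsSpanningTreeOn S :=
  let ⟨_, R, _, hR⟩ := Nat.nonempty_of_pos_sInf (Nat.pos_of_ne_zero h)
  ⟨Rᶜ, hR⟩

end FinQuiver

namespace GentleAlg

variable {A : GentleAlg} {x : Fin A.nV} {α β : Fin A.nA}

abbrev ContractArrow (α β : Fin A.nA) : Type := Option {a : Fin A.nA // a ≠ α ∧ a ≠ β}

def toPath : ContractArrow α β → List (Fin A.nA) := fun q => q.elim [α, β] fun a => [a.1]

def firstArrow : ContractArrow α β → Fin A.nA := fun q => q.elim α Subtype.val

def lastArrow : ContractArrow α β → Fin A.nA := fun q => q.elim β Subtype.val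

theorem firstArrow_injective : Function.Injective (firstArrow (α := α) (β := β)) := by
  rintro (_ | a) (_ | b) h
  · rfl
  · exact absurd h.symm b.2.1
  · exact absurd h a.2.1
  · exact congrArg some (Subtype.ext h)

theorem lastArrow_injective : Function.Injective (lastArrow (α := α) (β := β)) := by
  rintro (_ | a) (_ | b) h
  · rfl
  · exact absurd h.symm b.2.2
  · exact absurd h a.2.2
  · exact congrArg some (Subtype.ext h)

theorem toPath_ne_nil (q : ContractArrow α β) : toPath q ≠ [] := by
  cases q <;> simp [toPath]

theorem head?_toPath (q : ContractArrow α β) : (toPath q).head? = some (firstArrow q) := by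
  cases q <;> rfl

theorem getLast?_toPath (q : ContractArrow α β) : (toPath q).getLast? = some (lastArrow q) := by
  cases q <;> rfl

theorem head?_flatMap_toPath (l : List (ContractArrow α β)) :
    (l.flatMap toPath).head? = l.head?.map firstArrow := by
  cases l <;> simp [List.head?_flatMap, head?_toPath]

theorem getLast?_flatMap_toPath (l : List (ContractArrow α β)) :
    (l.flatMap toPath).getLast? = l.getLast?.map lastArrow := by
  rw [List.getLast?_flatMap, List.getLast?_eq_head?_reverse]
  cases l.reverse <;> simp [getLast?_toPath]

noncomputable def vertEquiv (x : Fin A.nV) : {v // v ≠ x} ≃ Fin (Fintype.card {v // v ≠ x}) :=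
  Fintype.equivFin _

noncomputable def arrowEquiv (α β : Fin A.nA) :
    ContractArrow α β ≃ Fin (Fintype.card (ContractArrow α β)) :=
  Fintype.equivFin _

def collapse (y : {v // v ≠ x}) (v : Fin A.nV) : {v // v ≠ x} :=
  if h : v = x then y else ⟨v, h⟩

theorem collapse_surjective (y : {v // v ≠ x}) : Function.Surjective (collapse y) :=
  fun v => ⟨v.1, dif_neg v.2⟩

theorem collapse_of_ne (y : {v // v ≠ x}) {v : Fin A.nV} (h : v ≠ x) : collapse y v = ⟨v, h⟩ :=
  dif_neg h

theorem collapse_self (y : {v // v ≠ x}) : collapse y x = y :=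
  dif_pos rfl

def contractArrow (α β : Fin A.nA) (a : Fin A.nA) : ContractArrow α β :=
  if h : a ≠ α ∧ a ≠ β then some ⟨a, h⟩ else none

theorem contractArrow_injOn {e : Fin A.nA} (he : e = α ∨ e = β) :
    Set.InjOn (contractArrow α β) {a | a ≠ e} := by
  intro a ha b hb hab
  unfold contractArrow at hab
  split_ifs at hab with h₁ h₂
  · exact congrArg Subtype.val (Option.some_inj.1 hab)
  · grind

namespace TransitionAt

theorem alpha_ne_beta (ht : A.TransitionAt x α β) : α ≠ β := ht.1

theorem not_rel (ht : A.TransitionAt x α β) : ¬ A.rel β α := ht.2.2.2.2.2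

theorem tgt_alpha (ht : A.TransitionAt x α β) : A.tgt α = x := ht.2.1

theorem src_beta (ht : A.TransitionAt x α β) : A.src β = x := ht.2.2.1

theorem eq_alpha_of_tgt_eq (ht : A.TransitionAt x α β) {a : Fin A.nA} (h : A.tgt a = x) : a = α :=
  ht.2.2.2.1 a h

theorem eq_beta_of_src_eq (ht : A.TransitionAt x α β) {a : Fin A.nA} (h : A.src a = x) : a = β :=
  ht.2.2.2.2.1 a h

theorem src_ne (ht : A.TransitionAt x α β) {a : Fin A.nA} (h : a ≠ β) : A.src a ≠ x :=
  fun hs => h (ht.eq_beta_of_src_eq hs)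

theorem tgt_ne (ht : A.TransitionAt x α β) {a : Fin A.nA} (h : a ≠ α) : A.tgt a ≠ x :=
  fun hs => h (ht.eq_alpha_of_tgt_eq hs)

theorem src_alpha_ne (ht : A.TransitionAt x α β) : A.src α ≠ x := ht.src_ne ht.alpha_ne_beta

theorem tgt_beta_ne (ht : A.TransitionAt x α β) : A.tgt β ≠ x := ht.tgt_ne ht.alpha_ne_beta.symm

theorem firstArrow_ne (ht : A.TransitionAt x α β) (q : ContractArrow α β) : firstArrow q ≠ β := by
  cases q with
  | none => exact ht.alpha_ne_beta
  | some a => exact a.2.2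

theorem lastArrow_ne (ht : A.TransitionAt x α β) (q : ContractArrow α β) : lastArrow q ≠ α := by
  cases q with
  | none => exact ht.alpha_ne_beta.symm
  | some a => exact a.2.1

def contractSrc (ht : A.TransitionAt x α β) (q : ContractArrow α β) : {v // v ≠ x} :=
  ⟨A.src (firstArrow q), ht.src_ne (ht.firstArrow_ne q)⟩

def contractTgt (ht : A.TransitionAt x α β) (q : ContractArrow α β) : {v // v ≠ x} :=
  ⟨A.tgt (lastArrow q), ht.tgt_ne (ht.lastArrow_ne q)⟩

theorem isPermPath_toPath (ht : A.TransitionAt x α β) (q : ContractArrow α β) :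
    A.IsPermPath (toPath q) := by
  cases q with
  | none => exact List.isChain_pair.2 ⟨ht.tgt_alpha.trans ht.src_beta.symm, ht.not_rel⟩
  | some a => exact List.isChain_singleton _

theorem isPermPath_flatMap_toPath (ht : A.TransitionAt x α β) {l : List (ContractArrow α β)}
    (hl : l.IsChain fun p q => A.tgt (lastArrow p) = A.src (firstArrow q) ∧
      ¬ A.rel (firstArrow q) (lastArrow p)) :
    A.IsPermPath (l.flatMap toPath) := by
  change List.IsChain _ _
  rw [List.flatMap_def, List.isChain_flatten (by simp [toPath_ne_nil])]
  refine ⟨?_, (List.isChain_map _).2 ?_⟩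
  · rintro _ hp
    obtain ⟨q, -, rfl⟩ := List.mem_map.1 hp
    exact ht.isPermPath_toPath q
  · exact hl.imp fun p q h => by simpa [getLast?_toPath, head?_toPath] using h

theorem vertEquiv_contractSrc_eq_contractTgt_iff (ht : A.TransitionAt x α β)
    (q p : ContractArrow α β) :
    vertEquiv x (ht.contractSrc q) = vertEquiv x (ht.contractTgt p) ↔
      A.src (firstArrow q) = A.tgt (lastArrow p) := by
  simp [contractSrc, contractTgt]

noncomputable def contract (ht : A.TransitionAt x α β) : GentleAlg where
  nV := Fintype.card {v // v ≠ x}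
  nA := Fintype.card (ContractArrow α β)
  src b := vertEquiv x (ht.contractSrc ((arrowEquiv α β).symm b))
  tgt a := vertEquiv x (ht.contractTgt ((arrowEquiv α β).symm a))
  rel b a := A.rel (firstArrow ((arrowEquiv α β).symm b)) (lastArrow ((arrowEquiv α β).symm a))
  rel_dec _ _ := A.rel_dec _ _
  rel_comp b a h := (vertEquiv_contractSrc_eq_contractTgt_iff ht _ _).2 (A.rel_comp _ _ h)
  out_le_two v := by
    refine le_trans (Nat.card_le_card_of_injective
      (Subtype.map (p := fun b => vertEquiv x (ht.contractSrc ((arrowEquiv α β).symm b)) = v)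
        (q := fun a => A.src a = ((vertEquiv x).symm v).1)
        (firstArrow ∘ (arrowEquiv α β).symm) fun b hb => by simp [← hb, contractSrc])
      (Subtype.map_injective _ (firstArrow_injective.comp (Equiv.injective _))))
      (A.out_le_two _)
  in_le_two v := by
    refine le_trans (Nat.card_le_card_of_injective
      (Subtype.map (p := fun a => vertEquiv x (ht.contractTgt ((arrowEquiv α β).symm a)) = v)
        (q := fun a => A.tgt a = ((vertEquiv x).symm v).1)
        (lastArrow ∘ (arrowEquiv α β).symm) fun b hb => by simp [← hb, contractTgt])
      (Subtype.map_injective _ (lastArrow_injective.comp (Equiv.injective _))))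
      (A.in_le_two _)
  perm_pred_unique b a a' h h' h₂ h₂' :=
    (Equiv.injective _) (lastArrow_injective (A.perm_pred_unique _ _ _
      ((vertEquiv_contractSrc_eq_contractTgt_iff ht _ _).1 h) h'
      ((vertEquiv_contractSrc_eq_contractTgt_iff ht _ _).1 h₂) h₂'))
  perm_succ_unique b c c' h h' h₂ h₂' :=
    (Equiv.injective _) (firstArrow_injective (A.perm_succ_unique _ _ _
      ((vertEquiv_contractSrc_eq_contractTgt_iff ht _ _).1 h) h'
      ((vertEquiv_contractSrc_eq_contractTgt_iff ht _ _).1 h₂) h₂'))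
  rel_pred_unique b a a' h h' :=
    (Equiv.injective _) (lastArrow_injective (A.rel_pred_unique _ _ _ h h'))
  rel_succ_unique b c c' h h' :=
    (Equiv.injective _) (firstArrow_injective (A.rel_succ_unique _ _ _ h h'))
  no_perm_cycle l hl hchain first last hfirst hlast hcomp := by
    refine A.no_perm_cycle ((l.map (arrowEquiv α β).symm).flatMap toPath) ?_
      (ht.isPermPath_flatMap_toPath ((List.isChain_map _).2 (hchain.imp fun _ _ hqp =>
        ⟨((vertEquiv_contractSrc_eq_contractTgt_iff ht _ _).1 hqp.1.symm).symm, hqp.2⟩)))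
      _ _ ?_ ?_ ((vertEquiv_contractSrc_eq_contractTgt_iff ht _ _).1 hcomp.symm).symm
    · obtain ⟨q, l, rfl⟩ := List.exists_cons_of_ne_nil hl
      simp [toPath_ne_nil]
    · simp [head?_flatMap_toPath, hfirst]
    · simp [getLast?_flatMap_toPath, hlast]

theorem contract_src (ht : A.TransitionAt x α β) (q : ContractArrow α β) :
    ht.contract.src (arrowEquiv α β q) = vertEquiv x (ht.contractSrc q) := by
  simp [contract]

theorem contract_tgt (ht : A.TransitionAt x α β) (q : ContractArrow α β) :
    ht.contract.tgt (arrowEquiv α β q) = vertEquiv x (ht.contractTgt q) := by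
  simp [contract]

theorem contract_rel (ht : A.TransitionAt x α β) (q p : ContractArrow α β) :
    ht.contract.rel (arrowEquiv α β q) (arrowEquiv α β p) ↔ A.rel (firstArrow q) (lastArrow p) := by
  simp [contract]

theorem isContraction_contract (ht : A.TransitionAt x α β) : A.IsContraction x α β ht.contract :=
  ⟨vertEquiv x, arrowEquiv α β, fun a _ => ht.contract_src (some a),
    fun a _ => ht.contract_tgt (some a), fun _ => ht.contract_src none,
    fun _ => ht.contract_tgt none, fun b a => ht.contract_rel (some b) (some a),
    fun b => ht.contract_rel (some b) none, fun a => ht.contract_rel none (some a),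
    ht.contract_rel none none⟩

theorem contract_nV_add_one (ht : A.TransitionAt x α β) : ht.contract.nV + 1 = A.nV :=
  (Fintype.card_subtype_ne_add_one x).trans (Fintype.card_fin _)

theorem contract_nA_add_one (ht : A.TransitionAt x α β) : ht.contract.nA + 1 = A.nA := by
  have hfilter : Finset.univ.filter (fun a => a ≠ α ∧ a ≠ β) = (Finset.univ.erase α).erase β := by
    ext
    simp [and_comm]
  show Fintype.card (ContractArrow α β) + 1 = A.nA
  rw [Fintype.card_option, Fintype.card_subtype, hfilter,
    Finset.card_erase_add_one (by simpa using ht.alpha_ne_beta.symm),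
    Finset.card_erase_add_one (Finset.mem_univ α), Finset.card_univ, Fintype.card_fin]

theorem contractSrc_contractArrow (ht : A.TransitionAt x α β) (y : {v // v ≠ x}) {a : Fin A.nA}
    (h : a ≠ β ∨ y.1 = A.src α) :
    ht.contractSrc (contractArrow α β a) = collapse y (A.src a) := by
  unfold contractArrow
  split_ifs with ha
  · exact (collapse_of_ne y (ht.src_ne ha.2)).symm
  · by_cases haα : a = α
    · subst haα
      exact (collapse_of_ne y ht.src_alpha_ne).symm
    · obtain rfl : a = β := by tauto
      rw [ht.src_beta, collapse_self]
      exact Subtype.ext (h.resolve_left (not_not.2 rfl)).symm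

theorem contractTgt_contractArrow (ht : A.TransitionAt x α β) (y : {v // v ≠ x}) {a : Fin A.nA}
    (h : a ≠ α ∨ y.1 = A.tgt β) :
    ht.contractTgt (contractArrow α β a) = collapse y (A.tgt a) := by
  unfold contractArrow
  split_ifs with ha
  · exact (collapse_of_ne y (ht.tgt_ne ha.1)).symm
  · by_cases haβ : a = β
    · subst haβ
      exact (collapse_of_ne y ht.tgt_beta_ne).symm
    · obtain rfl : a = α := by tauto
      rw [ht.tgt_alpha, collapse_self]
      exact Subtype.ext (h.resolve_left (not_not.2 rfl)).symm

theorem alpha_mem_or_beta_mem (ht : A.TransitionAt x α β) {T : Finset (Fin A.nA)}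
    (hT : A.ConnectedOn T) : α ∈ T ∨ β ∈ T := by
  rcases (hT x (A.tgt β)).cases_head with h | ⟨_, ⟨a, haT, ⟨hs, -⟩ | ⟨-, htg⟩⟩, -⟩
  · exact absurd h.symm ht.tgt_beta_ne
  · exact .inr (ht.eq_beta_of_src_eq hs ▸ haT)
  · exact .inl (ht.eq_alpha_of_tgt_eq htg ▸ haT)

theorem exists_isSpanningTreeOn_contract (ht : A.TransitionAt x α β) {T : Finset (Fin A.nA)}
    (hT : A.IsSpanningTreeOn T) : ∃ S, ht.contract.IsSpanningTreeOn S := by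
  obtain ⟨e, y, heT, he⟩ : ∃ e, ∃ y : {v // v ≠ x}, e ∈ T ∧
      (e = α ∧ y.1 = A.src α ∨ e = β ∧ y.1 = A.tgt β) := by
    rcases ht.alpha_mem_or_beta_mem hT.1 with h | h
    · exact ⟨α, ⟨A.src α, ht.src_alpha_ne⟩, h, .inl ⟨rfl, rfl⟩⟩
    · exact ⟨β, ⟨A.tgt β, ht.tgt_beta_ne⟩, h, .inr ⟨rfl, rfl⟩⟩
  have hcollapse : collapse y (A.src e) = collapse y (A.tgt e) := by
    rcases he with ⟨rfl, hy⟩ | ⟨rfl, hy⟩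
    · rw [ht.tgt_alpha, collapse_self, collapse_of_ne y ht.src_alpha_ne]
      exact Subtype.ext hy.symm
    · rw [ht.src_beta, collapse_self, collapse_of_ne y ht.tgt_beta_ne]
      exact Subtype.ext hy
  refine ⟨((T.erase e).image (contractArrow α β)).map (arrowEquiv α β).toEmbedding, ?_, ?_⟩
  · refine hT.1.map (fun v => vertEquiv x (collapse y v))
      ((vertEquiv x).surjective.comp (collapse_surjective y)) fun a ha => ?_
    by_cases hae : a = e
    · subst hae
      exact hcollapse ▸ .refl
    refine .single ⟨arrowEquiv α β (contractArrow α β a), Finset.mem_map_of_mem _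
      (Finset.mem_image_of_mem _ (Finset.mem_erase.2 ⟨hae, ha⟩)), .inl ⟨?_, ?_⟩⟩
    · rw [contract_src, ht.contractSrc_contractArrow y (by grind)]
    · rw [contract_tgt, ht.contractTgt_contractArrow y (by grind)]
  · show (((T.erase e).image (contractArrow α β)).map (arrowEquiv α β).toEmbedding).card + 1 =
      Fintype.card {v // v ≠ x}
    rw [Finset.card_map, Finset.card_image_of_injOn
      ((contractArrow_injOn (he.imp And.left And.left)).mono fun a ha => (Finset.mem_erase.1 ha).1),
      Finset.card_erase_of_mem heT]
    have := hT.2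
    have := (Fintype.card_subtype_ne_add_one x).trans (Fintype.card_fin _)
    have := Finset.card_pos.2 ⟨e, heT⟩
    omega

end TransitionAt

end GentleAlg

theorem contraction_gentle_general (A : GentleAlg)
    (hc : A.toFinQuiver.numCycles = 2) (x : Fin A.nV) (α β : Fin A.nA)
    (ht : GentleAlg.TransitionAt A x α β) :
    ∃ B : GentleAlg, GentleAlg.IsContraction A x α β B ∧
      B.toFinQuiver.Connected ∧ B.toFinQuiver.numCycles = 2 ∧
      B.nV + 1 = A.nV ∧ B.nA + 1 = A.nA := by
  obtain ⟨T, hT⟩ := A.exists_isSpanningTreeOn_of_numCycles_ne_zero (by omega)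
  obtain ⟨S, hS⟩ := ht.exists_isSpanningTreeOn_contract hT
  refine ⟨ht.contract, ht.isContraction_contract, hS.connected, ?_, ht.contract_nV_add_one,
    ht.contract_nA_add_one⟩
  have := hT.numCycles_add_nV
  have := hS.numCycles_add_nV
  have := ht.contract_nV_add_one
  have := ht.contract_nA_add_one
  omega

/-- contracting a gentle algebra with a two-cycle quiver at a transition
vertex yields again a gentle algebra whose quiver is connected with two cycles, having
one vertex and one arrow fewer. -/
theorem contraction_gentle (A : GentleAlg) (hconn : A.toFinQuiver.Connected)
    (hc : A.toFinQuiver.numCycles = 2) (x : Fin A.nV) (α β : Fin A.nA)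
    (ht : GentleAlg.TransitionAt A x α β) :
    ∃ B : GentleAlg, GentleAlg.IsContraction A x α β B ∧
      B.toFinQuiver.Connected ∧ B.toFinQuiver.numCycles = 2 ∧
      B.nV + 1 = A.nV ∧ B.nA + 1 = A.nA :=
  contraction_gentle_general A hc x α β ht
end
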